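/- arXiv:1007.1694 — 2 statements merged into one kernel-verified Lean document; each statement's English description precedes it below -/
import Mathlib

section
/- For every consistent counter machine Γ with m states and every designated halting state i* ∈ {1,…,m}, the modified reflection matrix R* of the associated Skorokhod problem is a completely-S matrix. -/
open scoped BigOperators

/-- A Skorokhod solution for the matrix `R` and input path `x`:
continuous `y, z` on `[0,∞)` with `z = x + R y`, `z ≥ 0`, `y 0 = 0`,
each `y j` nondecreasing, and `y j` does not increase while `z j > 0`
(the Lebesgue–Stieltjes measure of `y j` vanishes on `{s | z s j > 0}`). -/
def IsSkorokhodSolution {n : Type*} [Fintype n] (R : Matrix n n ℝ)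
    (x y z : ℝ → n → ℝ) : Prop :=
  ContinuousOn y (Set.Ici 0) ∧
  ContinuousOn z (Set.Ici 0) ∧
  (∀ t : ℝ, 0 ≤ t → z t = x t + R.mulVec (y t)) ∧
  (∀ t : ℝ, 0 ≤ t → ∀ j, 0 ≤ z t j) ∧
  (y 0 = 0) ∧
  (∀ j, MonotoneOn (fun t => y t j) (Set.Ici 0)) ∧
  (∀ j, ∀ s₁ s₂ : ℝ, 0 ≤ s₁ → s₁ ≤ s₂ →
      (∀ s ∈ Set.Ioo s₁ s₂, 0 < z s j) → y s₂ j = y s₁ j)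

/-- `R` is an S-matrix: some nonnegative `w` with `R w > 0` componentwise. -/
def IsSMatrix {n : Type*} [Fintype n] (R : Matrix n n ℝ) : Prop :=
  ∃ w : n → ℝ, (∀ i, 0 ≤ w i) ∧ (∀ i, 0 < R.mulVec w i)

/-- `R` is completely-S: every (nonempty) principal submatrix is an S-matrix. -/
def IsCompletelyS {n : Type*} [Fintype n] [DecidableEq n] (R : Matrix n n ℝ) : Prop :=
  ∀ I : Finset n, I.Nonempty →
    IsSMatrix (R.submatrix (fun a : I => (a : n)) (fun a : I => (a : n)))

/-- Stability of the fluid model `(z₀, θ, R)`: every Skorokhod solution for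
`x t = z₀ + θ t` satisfies `z t → 0` as `t → ∞`. -/
def FluidStable {n : Type*} [Fintype n] (z0 θv : n → ℝ) (R : Matrix n n ℝ) : Prop :=
  ∀ y z : ℝ → n → ℝ,
    IsSkorokhodSolution R (fun t i => z0 i + θv i * t) y z →
    Filter.Tendsto z Filter.atTop (nhds 0)

/-- `f` is active at rate `r` on `(s₁, s₂)`. -/
def ActiveAtRate (f : ℝ → ℝ) (r s₁ s₂ : ℝ) : Prop :=
  ∀ s ∈ Set.Ioo s₁ s₂, f s - f s₁ = r * (s - s₁)

/-- `f` is active at unit rate on `(s₁, s₂)`. -/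
def UnitActive (f : ℝ → ℝ) (s₁ s₂ : ℝ) : Prop := ActiveAtRate f 1 s₁ s₂

/-- `f` is passive (constant) on `(s₁, s₂)`. -/
def Passive (f : ℝ → ℝ) (s₁ s₂ : ℝ) : Prop := ∀ s ∈ Set.Ioo s₁ s₂, f s = f s₁

/-- A counter machine with `m` states: update map with moves in
`{(-1,0),(0,-1),(0,0),(1,0),(0,1)}`, never decrementing a zero counter. -/
structure CounterMachine (m : ℕ) where
  Γ : Fin m → Bool → Bool → Fin m × ℤ × ℤ
  moves : ∀ i b c, ((Γ i b c).2.1, (Γ i b c).2.2) ∈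
      ({(-1,0), (0,-1), (0,0), (1,0), (0,1)} : Set (ℤ × ℤ))
  consistent : ∀ i b c, (b = false → 0 ≤ (Γ i b c).2.1) ∧ (c = false → 0 ≤ (Γ i b c).2.2)

/-- One step of the counter machine on a configuration. -/
def CounterMachine.step {m : ℕ} (M : CounterMachine m) :
    Fin m × ℕ × ℕ → Fin m × ℕ × ℕ := fun cfg =>
  let r := M.Γ cfg.1 (decide (0 < cfg.2.1)) (decide (0 < cfg.2.2))
  (r.1, ((cfg.2.1 : ℤ) + r.2.1).toNat, ((cfg.2.2 : ℤ) + r.2.2).toNat)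

/-- Index set of the associated Skorokhod problem: groups A (5), B (m), C (2),
D (2), E (4m), F (4m); total dimension 5m + 9. -/
inductive Idx (m : ℕ) where
  | A : Fin 5 → Idx m
  | B : Fin m → Idx m
  | C : Fin 2 → Idx m
  | D : Fin 2 → Idx m
  | E : Fin m → Bool → Bool → Idx m
  | F : Fin m → Bool → Bool → Idx m
  deriving DecidableEq, Fintype

/-- Numeric value of a bit. -/
def bnum (b : Bool) : ℝ := if b then 1 else 0

/-- Real indicator of a decidable proposition. -/
def indC (P : Prop) [Decidable P] : ℝ := if P then 1 else 0

/-- The 5×5 block AA. -/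
def AAmat : Matrix (Fin 5) (Fin 5) ℝ :=
  !![1,2,1,1,0; 0,1,2,1,1; 1,0,1,2,1; 1,1,0,1,2; 2,1,1,0,1]

/-- The reflection matrix `R` associated with the counter machine `M`. -/
def Rmat {m : ℕ} (M : CounterMachine m) : Matrix (Idx m) (Idx m) ℝ :=
  fun p q => match p, q with
  | .A k, .A l => AAmat k l
  | .B _, .A l => if l = 0 then -1 else 0
  | .B j, .B j' => if j' = j then 1 else 0
  | .B j, .E i b c => if (M.Γ i b c).1 = j then 0 else 1
  | .C _, .A l => if l = 0 ∨ l = 3 then -1 else 0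
  | .C k, .C k' => if k' = k then 1 else 0
  | .C k, .D k' => if k' = k then 1 else 0
  | .C k, .E i b c =>
      (if k = 0 then ((M.Γ i b c).2.1 : ℝ) else ((M.Γ i b c).2.2 : ℝ)) + 1
  | .D _, .A l => if l = 1 then -1 else 0
  | .D k, .C k' => if k' = k then 1 else 0
  | .D k, .D k' => if k' = k then 1 else 0
  | .E _ b c, .A l => if l = 0 then -(bnum b) - bnum c else if l = 2 then -1 else 0
  | .E i _ _, .B j => if j = i then -1 else 0
  | .E _ b c, .C k => if k = 0 then 2 * bnum b - 1 else 2 * bnum c - 1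
  | .E i b c, .E i' b' c' => if i' = i ∧ b' = b ∧ c' = c then 1 else 0
  | .E i b c, .F i' b' c' => if i' = i ∧ b' = b ∧ c' = c then 1 else 0
  | .F _ b c, .A l => if l = 0 then -(bnum b) - bnum c
      else if l = 2 then -1 else if l = 3 then -4 else if l = 4 then 4 else 0
  | .F i _ _, .B j => if j = i then -1 else 0
  | .F _ b c, .C k => if k = 0 then 2 * bnum b - 1 else 2 * bnum c - 1
  | .F i b c, .E i' b' c' => if i' = i ∧ b' = b ∧ c' = c then 1 else 0
  | .F i b c, .F i' b' c' => if i' = i ∧ b' = b ∧ c' = c then 1 else 0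
  | _, _ => 0

/-- The modified reflection matrix `R*` with halting state `i*`. -/
def RmatStar {m : ℕ} (M : CounterMachine m) (istar : Fin m) :
    Matrix (Idx m) (Idx m) ℝ :=
  fun p q => match p, q with
  | .A k, .B j => if j = istar ∧ (k = 2 ∨ k = 3 ∨ k = 4) then -1 else 0
  | .E i b c, .B j =>
      if j = istar then -3 + bnum b + bnum c else if j = i then -1 else 0
  | .F i b c, .B j =>
      if j = istar then -4 + bnum b + bnum c else if j = i then -1 else 0
  | p, q => Rmat M p q

/-- The drift vector θ: −1 on the A-coordinates and 0 elsewhere. -/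
def thetaVec (m : ℕ) : Idx m → ℝ := fun p => match p with
  | .A _ => -1
  | _ => 0

/-- The encoding `z^{i,C₁,C₂}` of a configuration as a state of the
Skorokhod problem. -/
def encCfg {m : ℕ} (i : Fin m) (C₁ C₂ : ℕ) : Idx m → ℝ := fun p => match p with
  | .A k => if k = 0 ∨ k = 4 then 0 else 1
  | .B j => if j = i then 0 else 1
  | .C k => if k = 0 then (C₁ : ℝ) else (C₂ : ℝ)
  | .D _ => 0
  | .E _ _ _ => 3
  | .F _ _ _ => 4

/-- The linear input path `x t = z^{i,C₁,C₂} + θ t`. -/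
def fluidX {m : ℕ} (i : Fin m) (C₁ C₂ : ℕ) : ℝ → Idx m → ℝ :=
  fun t p => encCfg i C₁ C₂ p + thetaVec m p * t

/-- The quantity Υ(i′,b,c) of the paper (for current configuration (i,C₁,C₂)). -/
def Upsilon {m : ℕ} (i : Fin m) (C₁ C₂ : ℕ) (i' : Fin m) (b c : Bool) : ℝ :=
  -(bnum b) - bnum c + (2 * bnum b - 1) * indC (C₁ = 0)
    + (2 * bnum c - 1) * indC (C₂ = 0) - indC (i' = i)

/-! The S-witness for the principal submatrix indexed by `I` is one fixed weight vector restricted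
to `I`: weight 1 on A, 2 on B, 3 on C, 2 on D and 100 on E and F, except that `B i*` gets the
weight of `A 0` (1 if `A 0 ∈ I`, else 0) plus 1/2. Then every row of `R*` pairs positively with it.
In rows B, C, D, E, F the diagonal weight beats all negative entries, which only meet the small
weights on A, B and C (the counter increments are at least −1, so the C–E entries are
nonnegative). In rows `A 2`, `A 3`, `A 4` the one negative entry, −1 at `B i*`, is offset by the
diagonal 1 together with the entry at `A 0`; row `B i*` is why its weight must exceed that of
`A 0`. -/

open Matrix

theorem isSMatrix_submatrix_of_indicator {n : Type*} [Fintype n] (R : Matrix n n ℝ)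
    (I : Finset n) {w : n → ℝ} (hw : ∀ p, 0 ≤ w p)
    (hpos : ∀ p ∈ I, 0 < (R *ᵥ (↑I : Set n).indicator w) p) :
    IsSMatrix (R.submatrix (fun a : I => (a : n)) (fun a : I => (a : n))) := by
  refine ⟨fun a => w a, fun a => hw a, fun a => ?_⟩
  have hsum : (R.submatrix (fun a : I => (a : n)) (fun a : I => (a : n)) *ᵥ fun a => w a) a
      = (R *ᵥ (↑I : Set n).indicator w) a := by
    simp only [mulVec, dotProduct, submatrix_apply, ← Set.indicator_mul_right]
    rw [Finset.sum_coe_sort I fun q => R a q * w q,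
      ← Finset.sum_indicator_subset _ I.subset_univ]
  exact hsum ▸ hpos a a.2

theorem le_sum_ite_ite_mul {ι : Type*} [Fintype ι] [DecidableEq ι] {f : ι → ℝ}
    (hf : ∀ j, 0 ≤ f j) (a : ℝ) (s i : ι) :
    a * f s - f i ≤ ∑ j, if j = s then a * f j else if j = i then -f j else 0 := by
  by_cases h : i = s
  · subst h
    rw [Fintype.sum_eq_single i fun j hj => by simp [hj]]
    simpa using hf i
  · rw [Fintype.sum_eq_add s i (Ne.symm h) fun j hj => by simp [hj.1, hj.2]]
    simp [h]

theorem Prod.eq_triple_iff {α β γ : Type*} (t : α × β × γ) (a : α) (b : β) (c : γ) :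
    t = (a, b, c) ↔ t.1 = a ∧ t.2.1 = b ∧ t.2.2 = c := by
  obtain ⟨x, y, z⟩ := t
  simp

theorem bnum_mem_Icc (b : Bool) : bnum b ∈ Set.Icc 0 1 := by
  cases b <;> simp [bnum]

theorem CounterMachine.neg_one_le_delta {m : ℕ} (M : CounterMachine m) (i : Fin m) (b c : Bool) :
    -1 ≤ (M.Γ i b c).2.1 ∧ -1 ≤ (M.Γ i b c).2.2 := by
  have h := M.moves i b c
  simp only [Set.mem_insert_iff, Set.mem_singleton_iff, Prod.mk.injEq] at h
  omega

namespace Idx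

def equivSum (m : ℕ) :
    Fin 5 ⊕ Fin m ⊕ Fin 2 ⊕ Fin 2 ⊕ (Fin m × Bool × Bool) ⊕ (Fin m × Bool × Bool) ≃ Idx m where
  toFun
    | .inl k => .A k
    | .inr (.inl j) => .B j
    | .inr (.inr (.inl k)) => .C k
    | .inr (.inr (.inr (.inl k))) => .D k
    | .inr (.inr (.inr (.inr (.inl (i, b, c))))) => .E i b c
    | .inr (.inr (.inr (.inr (.inr (i, b, c))))) => .F i b c
  invFun
    | .A k => .inl k
    | .B j => .inr (.inl j)
    | .C k => .inr (.inr (.inl k))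
    | .D k => .inr (.inr (.inr (.inl k)))
    | .E i b c => .inr (.inr (.inr (.inr (.inl (i, b, c)))))
    | .F i b c => .inr (.inr (.inr (.inr (.inr (i, b, c)))))
  left_inv := by rintro (k | j | k | k | ⟨i, b, c⟩ | ⟨i, b, c⟩) <;> rfl
  right_inv := by rintro (k | j | k | k | ⟨i, b, c⟩ | ⟨i, b, c⟩) <;> rfl

theorem sum_eq {m : ℕ} {M : Type*} [AddCommMonoid M] (f : Idx m → M) :
    ∑ p, f p = ∑ k, f (.A k) + ∑ j, f (.B j) + ∑ k, f (.C k) + ∑ k, f (.D k)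
      + ∑ t : Fin m × Bool × Bool, f (.E t.1 t.2.1 t.2.2)
      + ∑ t : Fin m × Bool × Bool, f (.F t.1 t.2.1 t.2.2) := by
  rw [← (equivSum m).sum_comp]
  simp [Fintype.sum_sum_type, equivSum, add_assoc]

end Idx

namespace RmatStar

variable {m : ℕ} (M : CounterMachine m) (istar : Fin m) {W : Idx m → ℝ}

theorem mulVec_A_pos (hW : ∀ p, 0 ≤ W p) {k : Fin 5} (hk : W (.A k) = 1)
    (hstar : W (.B istar) ≤ W (.A 0) + 1 / 2) : 0 < (RmatStar M istar *ᵥ W) (.A k) := by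
  simp only [mulVec, dotProduct, Idx.sum_eq]
  fin_cases k <;>
    simp only [RmatStar, Rmat, AAmat, Fin.zero_eta, Fin.mk_one, Fin.reduceFinMk, Fin.isValue,
      of_apply, cons_val', cons_val_fin_one, cons_val_zero, cons_val_one, cons_val,
      Fin.sum_univ_five, Fin.reduceEq, reduceIte, or_self, or_false, or_true, and_false, and_true,
      ite_mul, neg_mul, one_mul, zero_mul, add_zero, Finset.sum_const_zero, Finset.sum_ite_eq',
      Finset.mem_univ] at hk ⊢ <;>
    linarith [hW (.A 0), hW (.A 1), hW (.A 2), hW (.A 3), hW (.A 4)]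

theorem mulVec_B_pos (hW : ∀ p, 0 ≤ W p) {j : Fin m} (hj : W (.A 0) < W (.B j)) :
    0 < (RmatStar M istar *ᵥ W) (.B j) := by
  have hE : 0 ≤ ∑ t : Fin m × Bool × Bool,
      if (M.Γ t.1 t.2.1 t.2.2).1 = j then 0 else W (.E t.1 t.2.1 t.2.2) :=
    Finset.sum_nonneg fun t _ => by split_ifs <;> simp [hW]
  simp only [mulVec, dotProduct, Idx.sum_eq, RmatStar, Rmat, Fin.isValue, reduceIte, ite_mul,
    neg_mul, one_mul, zero_mul, add_zero, Finset.sum_const_zero, Finset.sum_ite_eq', Finset.mem_univ]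
  linarith

theorem mulVec_C_pos (hW : ∀ p, 0 ≤ W p) (hA : ∀ l, W (.A l) ≤ 1) {k : Fin 2}
    (hk : W (.C k) = 3) : 0 < (RmatStar M istar *ᵥ W) (.C k) := by
  have hE : 0 ≤ ∑ t : Fin m × Bool × Bool,
      ((if k = 0 then ((M.Γ t.1 t.2.1 t.2.2).2.1 : ℝ) else (M.Γ t.1 t.2.1 t.2.2).2.2) + 1) *
        W (.E t.1 t.2.1 t.2.2) := by
    refine Finset.sum_nonneg fun t _ => mul_nonneg ?_ (hW _)
    obtain ⟨h₁, h₂⟩ := M.neg_one_le_delta t.1 t.2.1 t.2.2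
    split_ifs <;> norm_cast <;> omega
  simp only [mulVec, dotProduct, Idx.sum_eq, RmatStar, Rmat, Fin.sum_univ_five, Fin.isValue,
    Fin.reduceEq, reduceIte, or_self, or_false, or_true, ite_mul, neg_mul, one_mul, zero_mul,
    add_zero, Finset.sum_const_zero, Finset.sum_ite_eq', Finset.mem_univ]
  linarith [hA 0, hA 3, hW (.D k)]

theorem mulVec_D_pos (hW : ∀ p, 0 ≤ W p) (hA : ∀ l, W (.A l) ≤ 1) {k : Fin 2}
    (hk : W (.D k) = 2) : 0 < (RmatStar M istar *ᵥ W) (.D k) := by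
  simp only [mulVec, dotProduct, Idx.sum_eq, RmatStar, Rmat, Fin.isValue, reduceIte, ite_mul,
    neg_mul, one_mul, zero_mul, add_zero, Finset.sum_const_zero, Finset.sum_ite_eq', Finset.mem_univ]
  linarith [hA 1, hW (.C k)]

theorem mulVec_E_pos (hW : ∀ p, 0 ≤ W p) (hA : ∀ l, W (.A l) ≤ 1) (hB : ∀ j, W (.B j) ≤ 2)
    (hC : ∀ l, W (.C l) ≤ 3) {i : Fin m} {b c : Bool} (hE : W (.E i b c) = 100) :
    0 < (RmatStar M istar *ᵥ W) (.E i b c) := by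
  have hBsum := le_sum_ite_ite_mul (f := fun j => W (.B j)) (fun j => hW _)
    (-3 + bnum b + bnum c) istar i
  obtain ⟨hb₀, hb₁⟩ := bnum_mem_Icc b
  obtain ⟨hc₀, hc₁⟩ := bnum_mem_Icc c
  simp only [mulVec, dotProduct, Idx.sum_eq, RmatStar, Rmat, Fin.sum_univ_five, Fin.sum_univ_two,
    Fin.isValue, Fin.reduceEq, reduceIte, one_ne_zero, ite_mul, neg_mul, one_mul, zero_mul,
    add_zero, Finset.sum_const_zero, ← Prod.eq_triple_iff, Finset.sum_ite_eq', Finset.mem_univ]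
  nlinarith [hW (.A 0), hW (.A 2), hW (.C 0), hW (.C 1), hW (.B istar), hW (.B i), hW (.F i b c),
    hA 0, hA 2, hB istar, hB i, hC 0, hC 1]

theorem mulVec_F_pos (hW : ∀ p, 0 ≤ W p) (hA : ∀ l, W (.A l) ≤ 1) (hB : ∀ j, W (.B j) ≤ 2)
    (hC : ∀ l, W (.C l) ≤ 3) {i : Fin m} {b c : Bool} (hF : W (.F i b c) = 100) :
    0 < (RmatStar M istar *ᵥ W) (.F i b c) := by
  have hBsum := le_sum_ite_ite_mul (f := fun j => W (.B j)) (fun j => hW _)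
    (-4 + bnum b + bnum c) istar i
  obtain ⟨hb₀, hb₁⟩ := bnum_mem_Icc b
  obtain ⟨hc₀, hc₁⟩ := bnum_mem_Icc c
  simp only [mulVec, dotProduct, Idx.sum_eq, RmatStar, Rmat, Fin.sum_univ_five, Fin.sum_univ_two,
    Fin.isValue, Fin.reduceEq, reduceIte, one_ne_zero, ite_mul, neg_mul, one_mul, zero_mul,
    add_zero, Finset.sum_const_zero, ← Prod.eq_triple_iff, Finset.sum_ite_eq', Finset.mem_univ]
  nlinarith [hW (.A 0), hW (.A 2), hW (.A 4), hW (.C 0), hW (.C 1), hW (.B istar), hW (.B i),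
    hW (.E i b c), hA 0, hA 2, hA 3, hB istar, hB i, hC 0, hC 1]

end RmatStar

noncomputable def witnessWeight {m : ℕ} (istar : Fin m) (I : Finset (Idx m)) : Idx m → ℝ
  | .A _ => 1
  | .B j => if j = istar then indC (Idx.A 0 ∈ I) + 1 / 2 else 2
  | .C _ => 3
  | .D _ => 2
  | .E .. => 100
  | .F .. => 100

theorem witnessWeight_nonneg {m : ℕ} (istar : Fin m) (I : Finset (Idx m)) (p : Idx m) :
    0 ≤ witnessWeight istar I p := by
  cases p <;> simp only [witnessWeight, indC] <;> try split_ifs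
  all_goals norm_num

theorem RmatStar.mulVec_indicator_witnessWeight_pos {m : ℕ} (M : CounterMachine m)
    (istar : Fin m) (I : Finset (Idx m)) {p : Idx m} (hp : p ∈ I) :
    0 < (RmatStar M istar *ᵥ (↑I : Set (Idx m)).indicator (witnessWeight istar I)) p := by
  set W := (↑I : Set (Idx m)).indicator (witnessWeight istar I)
  have hW : ∀ q, 0 ≤ W q := Set.indicator_nonneg fun q _ => witnessWeight_nonneg istar I q
  have hle : ∀ q, W q ≤ witnessWeight istar I q :=
    Set.indicator_le_self' fun q _ => witnessWeight_nonneg istar I q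
  have hmem : ∀ q ∈ I, W q = witnessWeight istar I q := fun q hq => Set.indicator_of_mem hq _
  have hA0 : W (.A 0) = indC (Idx.A 0 ∈ I) := by
    simp only [W, Set.indicator_apply, Finset.mem_coe, indC, witnessWeight]
  have hA0_le : indC (Idx.A 0 ∈ I) ≤ 1 := by simp only [indC]; split_ifs <;> norm_num
  have hB : ∀ j, W (.B j) ≤ 2 := fun j => (hle _).trans <| by
    simp only [witnessWeight]; split_ifs <;> linarith
  have hstar : W (.B istar) ≤ W (.A 0) + 1 / 2 := by
    simpa [hA0, witnessWeight] using hle (.B istar)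
  have hA0_lt : ∀ j, Idx.B j ∈ I → W (.A 0) < W (.B j) := fun j hj => by
    rw [hmem _ hj, hA0, witnessWeight]
    split_ifs <;> linarith
  cases p with
  | A k => exact mulVec_A_pos M istar hW (hmem _ hp) hstar
  | B j => exact mulVec_B_pos M istar hW (hA0_lt j hp)
  | C k => exact mulVec_C_pos M istar hW (fun _ => hle _) (hmem _ hp)
  | D k => exact mulVec_D_pos M istar hW (fun _ => hle _) (hmem _ hp)
  | E i b c => exact mulVec_E_pos M istar hW (fun _ => hle _) hB (fun _ => hle _) (hmem _ hp)
  | F i b c => exact mulVec_F_pos M istar hW (fun _ => hle _) hB (fun _ => hle _) (hmem _ hp)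

/-- For every consistent counter machine and halting state,
the modified reflection matrix `R*` is completely-S. -/
theorem RmatStar_isCompletelyS {m : ℕ} (M : CounterMachine m) (istar : Fin m) :
    IsCompletelyS (RmatStar M istar) := fun I _ =>
  isSMatrix_submatrix_of_indicator _ I (witnessWeight_nonneg istar I) fun _ hp =>
    RmatStar.mulVec_indicator_witnessWeight_pos M istar I hp
end

section
/- Let AA be the 5×5 real matrix with rows (1,2,1,1,0), (0,1,2,1,1), (1,0,1,2,1), (1,1,0,1,2), (2,1,1,0,1), and let x : [0,∞) → ℝ⁵ be x(t) = (0,1,1,1,0) − (1,1,1,1,1)·t. Then every Skorokhod solution (y,z) for (AA, x) satisfies, for every t ∈ ℕ: z(5t) = (0,1,1,1,0); for each i ∈ {1,2,3,4}, z_i(5t+i) = z_{i+1}(5t+i) = 0 and z_j(5t+i) = 1 for j ∉ {i,i+1}; and for each i ∈ {0,1,2,3,4}, the coordinate y_{i+1} is active at unit rate on the interval (5t+i, 5t+i+1) and is passive on every interval (5t+j, 5t+j+1) with j ≠ i. In particular z(t) cycles with period 5 through the five vectors (0,1,1,1,0), (0,0,1,1,1), (1,0,0,1,1), (1,1,0,0,1),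 (1,1,1,0,0) at integer times. -/
open scoped BigOperators

/-!
On `[T, T + 1]`, starting from the state `z T = v_i` (zeros exactly at `i - 1` and `i`), the
coordinates `i + 1, i + 2, i + 3` of `z` are positive, so their pushing variables are frozen.
With them frozen, `z_i` is a one-dimensional reflection of the drift `-1` and therefore stays
at `0`, which forces `y_i` to grow at unit rate; this in turn drives `z_{i-1}` up at rate `1`,
so `y_{i-1}` is frozen as well. The resulting path `v_i + u (A e_i - 1)` keeps `i + 1, i + 2,
i + 3` positive for `u < 1`, which closes a continuous induction on `[T, T + 1]`, and it ends
at `v_{i+1}`. Induction on the integer times gives the cycle.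
-/

open Set Filter Topology Fin.NatCast

namespace IsSkorokhodSolution

variable {n : Type*} [Fintype n] {R : Matrix n n ℝ} {x y z : ℝ → n → ℝ}

theorem apply_eq (h : IsSkorokhodSolution R x y z) {s t : ℝ} (hs : 0 ≤ s) (ht : 0 ≤ t)
    (j : n) : z t j = z s j + (x t j - x s j) + ∑ k, R j k * (y t k - y s k) := by
  obtain ⟨-, -, hzx, -⟩ := h
  simp only [hzx s hs, hzx t ht, Pi.add_apply, Matrix.mulVec, dotProduct, mul_sub,
    Finset.sum_sub_distrib]
  ring

theorem eventually_eq_of_pos (h : IsSkorokhodSolution R x y z) {t : ℝ} (ht : 0 ≤ t) {j : n}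
    (hj : 0 < z t j) : ∀ᶠ s in 𝓝[≥] t, y s j = y t j := by
  obtain ⟨-, hzc, -, -, -, -, hcomp⟩ := h
  have hzj : ContinuousWithinAt (fun s => z s j) (Ici t) t :=
    ((continuous_apply j).comp_continuousOn (hzc.mono (Ici_subset_Ici.2 ht))).continuousWithinAt
      self_mem_Ici
  obtain ⟨b, htb, hpos⟩ := mem_nhdsGE_iff_exists_Ico_subset.1 (hzj.eventually_const_lt hj)
  filter_upwards [Ico_mem_nhdsGE htb] with s hs
  exact hcomp j t s ht hs.1 fun r hr => hpos ⟨hr.1.le, hr.2.trans hs.2⟩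

end IsSkorokhodSolution

theorem eqOn_zero_of_eq_antitone_add {f h g : ℝ → ℝ} {a b : ℝ} (hf : ContinuousOn f (Icc a b))
    (hfa : f a = 0) (hf_nonneg : ∀ s ∈ Icc a b, 0 ≤ f s)
    (hfhg : ∀ s ∈ Icc a b, f s = h s + g s) (hh : AntitoneOn h (Icc a b))
    (hg : ∀ s₁ s₂, a ≤ s₁ → s₁ ≤ s₂ → s₂ ≤ b → (∀ s ∈ Ioo s₁ s₂, 0 < f s) → g s₂ = g s₁) :
    EqOn f 0 (Icc a b) := by
  intro s hs
  by_contra hne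
  -- compare `s` with the last zero `r` of `f` before it: `g` is constant on `[r, s]`
  set Z := Icc a s ∩ f ⁻¹' {0}
  have hZ_bdd : BddAbove Z := ⟨s, fun r hr => hr.1.2⟩
  have hr : sSup Z ∈ Z :=
    ((hf.mono (Icc_subset_Icc_right hs.2)).preimage_isClosed_of_isClosed isClosed_Icc
      isClosed_singleton).csSup_mem ⟨a, ⟨le_rfl, hs.1⟩, hfa⟩ hZ_bdd
  set r := sSup Z
  have hr_mem : r ∈ Icc a b := ⟨hr.1.1, hr.1.2.trans hs.2⟩
  have hrs : r < s := hr.1.2.lt_of_ne fun hrs => hne (hrs ▸ hr.2)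
  have hpos : ∀ q ∈ Ioo r s, 0 < f q := fun q hq =>
    (hf_nonneg q ⟨hr.1.1.trans hq.1.le, hq.2.le.trans hs.2⟩).lt_of_ne fun hq0 =>
      (le_csSup hZ_bdd ⟨⟨hr.1.1.trans hq.1.le, hq.2.le⟩, hq0.symm⟩).not_gt hq.1
  have hgr := hg r s hr.1.1 hrs.le hs.2 hpos
  have hfr : f r = 0 := hr.2
  have := hh hr_mem hs hrs.le
  have := hf_nonneg s hs
  rw [hfhg s hs, hgr] at hne this
  rw [hfhg r hr_mem] at hfr
  exact hne (by simp only [Pi.zero_apply]; linarith)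

theorem AAmat_apply (j k : Fin 5) : AAmat j k = ![1, 2, 1, 1, 0] (k - j) := by
  fin_cases j <;> fin_cases k <;> rfl

/-- The state `v_i + u (A e_i - 1)`, indexed relative to `i`. -/
def cyclePath (i : Fin 5) (u : ℝ) : Fin 5 → ℝ := fun j => ![0, 1 - u, 1, 1, u] (j - i)

theorem cyclePath_zero_zero : cyclePath 0 0 = ![0, 1, 1, 1, 0] := by
  funext j; fin_cases j <;> simp [cyclePath]

theorem cyclePath_one (i : Fin 5) : cyclePath i 1 = cyclePath (i + 1) 0 := by
  funext j
  simp only [cyclePath, sub_add_eq_sub_sub]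
  generalize j - i = d
  fin_cases d <;> simp

theorem cyclePath_zero_sub_add (i : Fin 5) (u : ℝ) (j : Fin 5) :
    cyclePath i 0 j - u + AAmat j i * u = cyclePath i u j := by
  rw [AAmat_apply, ← neg_sub j i]
  simp only [cyclePath]
  generalize j - i = d
  fin_cases d <;> simp
  ring

theorem cyclePath_self (i : Fin 5) (u : ℝ) : cyclePath i u i = 0 := by simp [cyclePath]

theorem cyclePath_sub_one (i : Fin 5) (u : ℝ) : cyclePath i u (i - 1) = u := by
  simp only [cyclePath, sub_sub_cancel_left]
  rfl

theorem cyclePath_pos {u : ℝ} (hu : u < 1) {i j : Fin 5} (hji : j ≠ i) (hji' : j ≠ i - 1) :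
    0 < cyclePath i u j := by
  rw [← sub_ne_zero] at hji
  rw [Ne, sub_eq_neg_add, ← sub_eq_iff_eq_add] at hji'
  simp only [cyclePath]
  generalize j - i = d at hji hji'
  fin_cases d <;> simp at hji hji' ⊢ <;> first | linarith | exact (hji' (by decide)).elim

section Step

variable {x y z : ℝ → Fin 5 → ℝ}

theorem eventually_frozen_of_eq_cyclePath (hsol : IsSkorokhodSolution AAmat x y z) {t u : ℝ}
    (ht : 0 ≤ t) (hu : u < 1) {i : Fin 5} (hzt : z t = cyclePath i u) :
    ∀ᶠ s in 𝓝[≥] t, ∀ k, k ≠ i → k ≠ i - 1 → y s k = y t k := by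
  refine eventually_all.2 fun k => ?_
  by_cases hk : k ≠ i ∧ k ≠ i - 1
  · refine (hsol.eventually_eq_of_pos ht ?_).mono fun s hs _ _ => hs
    rw [hzt]
    exact cyclePath_pos hu hk.1 hk.2
  · exact Eventually.of_forall fun s h₁ h₂ => absurd ⟨h₁, h₂⟩ hk

theorem apply_eq_of_frozen (hsol : IsSkorokhodSolution AAmat x y z)
    (hx : ∀ s t k, x t k - x s k = s - t) {t s : ℝ} (ht : 0 ≤ t) (hts : t ≤ s) {i : Fin 5}
    (hfrozen : ∀ k, k ≠ i → k ≠ i - 1 → y s k = y t k) (j : Fin 5) :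
    z s j = z t j - (s - t) + AAmat j i * (y s i - y t i)
      + AAmat j (i - 1) * (y s (i - 1) - y t (i - 1)) := by
  have hi : i ≠ i - 1 := (by decide : ∀ i : Fin 5, i ≠ i - 1) i
  rw [hsol.apply_eq ht (ht.trans hts), hx, Fintype.sum_eq_add i (i - 1) hi
    fun k hk => by rw [hfrozen k hk.1 hk.2, sub_self, mul_zero]]
  ring

theorem eqOn_add_single_of_frozen (hsol : IsSkorokhodSolution AAmat x y z)
    (hx : ∀ s t k, x t k - x s k = s - t) {t u b : ℝ} (ht : 0 ≤ t) (hu : 0 ≤ u) {i : Fin 5}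
    (hzt : z t = cyclePath i u)
    (hfrozen : ∀ s ∈ Icc t b, ∀ k, k ≠ i → k ≠ i - 1 → y s k = y t k) :
    ∀ s ∈ Icc t b, y s = y t + Pi.single i (s - t) := by
  obtain ⟨-, hzc, -, hz_nonneg, -, hmono, hcomp⟩ := id hsol
  have hz (s : ℝ) (hs : s ∈ Icc t b) := apply_eq_of_frozen hsol hx ht hs.1 (hfrozen s hs)
  have hzi : EqOn (fun s => z s i) 0 (Icc t b) := by
    refine eqOn_zero_of_eq_antitone_add (h := fun s => -(s - t)) (g := fun s => y s i - y t i)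
      ((continuous_apply i).comp_continuousOn (hzc.mono fun s hs => ht.trans hs.1))
      (by simp [hzt, cyclePath_self]) (fun s hs => hz_nonneg s (ht.trans hs.1) i)
      (fun s hs => ?_) (fun s₁ _ s₂ _ h => by simp only; linarith)
      (fun s₁ s₂ h₁ h₁₂ _ hpos => by rw [hcomp i s₁ s₂ (ht.trans h₁) h₁₂ hpos])
    simp [hz s hs, hzt, cyclePath_self, AAmat_apply]
  have hyi (s : ℝ) (hs : s ∈ Icc t b) : y s i = y t i + (s - t) := by
    have := hzi hs
    simp [hz s hs, hzt, cyclePath_self, AAmat_apply] at this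
    linarith
  -- with `y_i` growing at unit rate, `z_{i-1}` grows at least at unit rate from `u ≥ 0`
  have hyprev (s : ℝ) (hs : s ∈ Icc t b) : y s (i - 1) = y t (i - 1) := by
    refine hcomp (i - 1) t s ht hs.1 fun q hq => ?_
    have hq' : q ∈ Icc t b := ⟨hq.1.le, hq.2.le.trans hs.2⟩
    have := hmono (i - 1) (mem_Ici.2 ht) (mem_Ici.2 (ht.trans hq'.1)) hq'.1
    simp only [hz q hq', hzt, cyclePath_sub_one, AAmat_apply, hyi q hq'] at this ⊢
    simp
    linarith [hq.1]
  intro s hs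
  funext k
  by_cases hki : k = i
  · subst hki; simp [hyi s hs]
  by_cases hkp : k = i - 1
  · subst hkp; simp [hyprev s hs, hki]
  · simp [hfrozen s hs k hki hkp, hki]

theorem eventually_eq_add_single_of_eq_cyclePath (hsol : IsSkorokhodSolution AAmat x y z)
    (hx : ∀ s t k, x t k - x s k = s - t) {t u : ℝ} (ht : 0 ≤ t) (hu0 : 0 ≤ u)
    (hu1 : u < 1) {i : Fin 5} (hzt : z t = cyclePath i u) :
    ∀ᶠ s in 𝓝[≥] t, y s = y t + Pi.single i (s - t) := by
  obtain ⟨b, htb, hfrozen⟩ := mem_nhdsGE_iff_exists_Icc_subset.1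
    (eventually_frozen_of_eq_cyclePath hsol ht hu1 hzt)
  filter_upwards [Icc_mem_nhdsGE htb] with s hs
  exact eqOn_add_single_of_frozen hsol hx ht hu0 hzt hfrozen s hs

theorem eq_cyclePath_of_eq_add_single (hsol : IsSkorokhodSolution AAmat x y z)
    (hx : ∀ s t k, x t k - x s k = s - t) {T s : ℝ} (hT : 0 ≤ T) (hTs : T ≤ s) {i : Fin 5}
    (hzT : z T = cyclePath i 0) (hys : y s = y T + Pi.single i (s - T)) :
    z s = cyclePath i (s - T) := by
  funext j
  rw [hsol.apply_eq hT (hT.trans hTs), hx, hys, hzT, ← cyclePath_zero_sub_add i (s - T)]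
  simp [Pi.single_apply]
  ring

theorem eq_add_single_of_eq_cyclePath (hsol : IsSkorokhodSolution AAmat x y z)
    (hx : ∀ s t k, x t k - x s k = s - t) {T : ℝ} (hT : 0 ≤ T) {i : Fin 5}
    (hzT : z T = cyclePath i 0) : ∀ s ∈ Icc T (T + 1), y s = y T + Pi.single i (s - T) := by
  suffices Icc T (T + 1) ⊆ {s | y s = y T + Pi.single i (s - T)} from this
  refine IsClosed.Icc_subset_of_forall_mem_nhdsWithin ?_ (by simp) ?_
  · have hcont : ContinuousOn (fun s => y s - (y T + Pi.single i (s - T))) (Icc T (T + 1)) :=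
      (hsol.1.mono fun s hs => hT.trans hs.1).sub <| continuousOn_const.add
        ((continuous_single i).comp (continuous_sub_right T)).continuousOn
    convert hcont.preimage_isClosed_of_isClosed isClosed_Icc (isClosed_singleton (x := 0)) using 1
    ext s
    simp [sub_eq_zero, and_comm]
  · rintro s ⟨hys, hTs, hs1⟩
    have hzs := eq_cyclePath_of_eq_add_single hsol hx hT hTs hzT hys
    refine nhdsWithin_mono _ Ioi_subset_Ici_self <|
      (eventually_eq_add_single_of_eq_cyclePath hsol hx (hT.trans hTs) (sub_nonneg.2 hTs)
        (by linarith) hzs).mono fun q hq => ?_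
    rw [hq, hys, add_assoc, ← Pi.single_add]
    ring_nf

theorem z_natCast_eq_cyclePath (hsol : IsSkorokhodSolution AAmat x y z)
    (hx : ∀ s t k, x t k - x s k = s - t) (hz0 : z 0 = cyclePath 0 0) (n : ℕ) :
    z n = cyclePath n 0 := by
  induction n with
  | zero => simpa using hz0
  | succ n ih =>
    have hy := eq_add_single_of_eq_cyclePath hsol hx n.cast_nonneg ih
    rw [Nat.cast_succ, Nat.cast_succ, ← cyclePath_one,
      eq_cyclePath_of_eq_add_single hsol hx n.cast_nonneg (by linarith) ih
        (hy _ ⟨by linarith, le_rfl⟩), add_sub_cancel_left]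

end Step

/-- Dynamics of the A-block: for the matrix `AA` and input
`x(t) = (0,1,1,1,0) − (1,…,1) t`, every Skorokhod solution is periodic with
period 5, cycling through the indicated vectors at integer times, with `y_{i+1}`
the unique active (at unit rate) variable on `(5t+i, 5t+i+1)`. -/
theorem A_block_dynamics (y z : ℝ → Fin 5 → ℝ)
    (h : IsSkorokhodSolution AAmat
      (fun t k => (![0, 1, 1, 1, 0] : Fin 5 → ℝ) k - t) y z) :
    ∀ t : ℕ,
      (z (5 * (t : ℝ)) = ![0, 1, 1, 1, 0]) ∧
      (∀ i : ℕ, 1 ≤ i → i ≤ 4 → ∀ j : Fin 5,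
        z (5 * (t : ℝ) + (i : ℝ)) j =
          if j.val = i - 1 ∨ j.val = i then 0 else 1) ∧
      (∀ i : Fin 5,
        UnitActive (fun s => y s i) (5 * (t : ℝ) + (i.val : ℝ))
          (5 * (t : ℝ) + (i.val : ℝ) + 1) ∧
        ∀ j : Fin 5, j ≠ i →
          Passive (fun s => y s i) (5 * (t : ℝ) + (j.val : ℝ))
            (5 * (t : ℝ) + (j.val : ℝ) + 1)) := by
  intro t
  have hx : ∀ s t : ℝ, ∀ k : Fin 5,
      (![0, 1, 1, 1, 0] k - t) - (![0, 1, 1, 1, 0] k - s) = s - t := fun _ _ _ => by ring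
  have hz0 : z 0 = cyclePath 0 0 := by
    rw [cyclePath_zero_zero, h.2.2.1 0 le_rfl, h.2.2.2.2.1, Matrix.mulVec_zero]
    simp
  have hz (k : ℕ) : z (5 * t + k) = cyclePath k 0 := by
    have hk : ((5 * t + k : ℕ) : Fin 5) = k := by simp
    have := z_natCast_eq_cyclePath h hx hz0 (5 * t + k)
    rwa [hk, Nat.cast_add, Nat.cast_mul, Nat.cast_ofNat] at this
  have hy (k : Fin 5) : ∀ s ∈ Icc (5 * t + k.val : ℝ) (5 * t + k.val + 1),
      y s = y (5 * t + k.val) + Pi.single k (s - (5 * t + k.val)) :=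
    eq_add_single_of_eq_cyclePath h hx (by positivity) (by simpa using hz k.val)
  refine ⟨by simpa [cyclePath_zero_zero] using hz 0, fun k hk1 hk4 j => ?_,
    fun i => ⟨fun s hs => ?_, fun j hji s hs => ?_⟩⟩
  · rw [hz k]
    interval_cases k <;> fin_cases j <;> simp [cyclePath]
  · have := congrFun (hy i s (Ioo_subset_Icc_self hs)) i
    show _ = 1 * _
    simp at this
    linarith
  · have := congrFun (hy j s (Ioo_subset_Icc_self hs)) i
    simpa [Pi.single_apply, hji.symm] using this
end
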